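/- For every ω > 0 and every t ≥ 0, the matrix exp(−t · A^{(p;ω)}_{(𝒥)}) is invertible and belongs to ⟨p⟩^+, i.e., it is entrywise nonnegative, its rows sum to 1, and it leaves the row vector p invariant. -/

import Mathlib

open Matrix

/-- The ratio `r_j := p_j / p_n` for `j ∈ [n-1]`, with the state space `[n]` modeled as
`Fin (m+1)`, the last state `n` as `Fin.last m`, and `[n-1]` as `Fin m` via `Fin.castSucc`. -/
noncomputable def r (m : ℕ) (p : Fin (m + 1) → ℝ) (j : Fin m) : ℝ :=
  p j.castSucc / p (Fin.last m)

/-- `e^{(p)}_{(j,k)} := (e_j − r_j e_n)(e_k^T − e_n^T)` as an `(m+1) × (m+1)` real matrix. -/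
noncomputable def Ep (m : ℕ) (p : Fin (m + 1) → ℝ) (j k : Fin m) :
    Matrix (Fin (m + 1)) (Fin (m + 1)) ℝ :=
  Matrix.vecMulVec
    (fun a => (if a = j.castSucc then (1 : ℝ) else 0) -
      r m p j * (if a = Fin.last m then (1 : ℝ) else 0))
    (fun b => (if b = k.castSucc then (1 : ℝ) else 0) - (if b = Fin.last m then (1 : ℝ) else 0))

/-- For a `d`-element subset `𝒥 = {j_1, …, j_d} ⊆ [n-1]` (given as an injective tuple
`J : Fin d → Fin m`) and a `d × d` matrix `μ`, the `n × n` matrix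
`μ^{(p)}_{(𝒥)} := Σ_{u,v} μ_{uv} e^{(p)}_{(j_u, j_v)}`. -/
noncomputable def liftJ (m d : ℕ) (p : Fin (m + 1) → ℝ) (J : Fin d → Fin m)
    (μ : Matrix (Fin d) (Fin d) ℝ) : Matrix (Fin (m + 1)) (Fin (m + 1)) ℝ :=
  ∑ u, ∑ v, μ u v • Ep m p (J u) (J v)

/-- The matrix `A^{(p;ω)}_{(𝒥)} := ω Σ_{u,v} (δ_{j_u j_v} − r_{j_v}/(1 + r_{(𝒥)} 1_d))
e^{(p)}_{(j_u, j_v)}`. -/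
noncomputable def AJ (m d : ℕ) (p : Fin (m + 1) → ℝ) (J : Fin d → Fin m) (ω : ℝ) :
    Matrix (Fin (m + 1)) (Fin (m + 1)) ℝ :=
  ω • ∑ u, ∑ v,
    ((if J u = J v then (1 : ℝ) else 0) - r m p (J v) / (1 + ∑ w, r m p (J w))) •
      Ep m p (J u) (J v)

/-!
Write `B = -(t • A)`. Every `e^{(p)}_{(j,k)}` kills `1` on the right and `p` on the left, hence so
does `B`; as every positive power of `B` kills them too, `exp B` fixes `1` and `p`. For the sign
pattern, an injective `J` makes `A` the rank-one perturbation `ω (diag χ - c⁻¹ χ ρᵀ)` of a diagonal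
matrix, with `χ, ρ ≥ 0` and `c = 1 + r_{(𝒥)} 1_d > 0`, so `B` has nonnegative off-diagonal entries.
Adding a multiple of the identity makes such a matrix entrywise nonnegative, and then so is its
exponential series; the scalar part only contributes a positive factor.
-/

open NormedSpace
open scoped Nat

namespace Matrix

variable {ι 𝕂 : Type*} [Fintype ι] [DecidableEq ι] [RCLike 𝕂]

theorem hasSum_exp (B : Matrix ι ι 𝕂) :
    HasSum (fun k : ℕ => (k !⁻¹ : 𝕂) • B ^ k) (exp B) :=
  open scoped Norms.Operator in exp_series_hasSum_exp' B

theorem exp_mulVec_of_mulVec_eq_zero {B : Matrix ι ι 𝕂} {v : ι → 𝕂} (h : B *ᵥ v = 0) :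
    exp B *ᵥ v = v := by
  refine ((hasSum_exp B).map (mulVec.addMonoidHomLeft v)
    (continuous_id.matrix_mulVec continuous_const)).unique ?_
  convert hasSum_single 0 fun k hk => ?_
  · simp [mulVec.addMonoidHomLeft]
  · obtain ⟨k, rfl⟩ := Nat.exists_eq_succ_of_ne_zero hk
    simp [mulVec.addMonoidHomLeft, smul_mulVec, pow_succ, ← mulVec_mulVec, h]

theorem vecMul_exp_of_vecMul_eq_zero {B : Matrix ι ι 𝕂} {v : ι → 𝕂} (h : v ᵥ* B = 0) :
    v ᵥ* exp B = v := by
  rw [← mulVec_transpose, ← exp_transpose]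
  exact exp_mulVec_of_mulVec_eq_zero (by rwa [mulVec_transpose])

theorem exp_apply_nonneg {B : Matrix ι ι ℝ} (h : ∀ a b, 0 ≤ B a b) (a b : ι) :
    0 ≤ exp B a b :=
  (Pi.hasSum.mp (Pi.hasSum.mp (hasSum_exp B) a) b).nonneg fun k =>
    mul_nonneg (by positivity) (pow_apply_nonneg h k a b)

theorem exp_apply_nonneg_of_offDiag_nonneg {B : Matrix ι ι ℝ}
    (h : ∀ a b, a ≠ b → 0 ≤ B a b) (a b : ι) : 0 ≤ exp B a b := by
  set c := ∑ i, |B i i|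
  have hshift : ∀ a b, 0 ≤ (B + c • 1) a b := by
    intro a b
    rcases eq_or_ne a b with rfl | hab
    · have := (neg_le_abs (B a a)).trans
        (Finset.single_le_sum (fun i _ => abs_nonneg (B i i)) (Finset.mem_univ a))
      simp only [add_apply, smul_apply, one_apply_eq, smul_eq_mul, mul_one]
      linarith
    · simpa [one_apply_ne hab] using h a b hab
  have hexp : exp B = exp (B + c • 1) * exp (diagonal fun _ => -c) := by
    rw [← smul_one_eq_diagonal, ← exp_add_of_commute _ _ ((Commute.one_right _).smul_right _)]
    congr 1
    module
  rw [hexp, exp_diagonal, mul_diagonal, Pi.exp_def, ← Real.exp_eq_exp_ℝ]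
  exact mul_nonneg (exp_apply_nonneg hshift a b) (Real.exp_nonneg _)

end Matrix

theorem Ep_mulVec_one (m : ℕ) (p : Fin (m + 1) → ℝ) (j k : Fin m) :
    Ep m p j k *ᵥ (fun _ => 1) = 0 := by
  ext a
  simp [Ep, vecMulVec_mulVec, dotProduct, Finset.sum_sub_distrib]

theorem vecMul_Ep {m : ℕ} {p : Fin (m + 1) → ℝ} (hp : p (Fin.last m) ≠ 0) (j k : Fin m) :
    p ᵥ* Ep m p j k = 0 := by
  have : p ⬝ᵥ (fun a => (if a = j.castSucc then (1 : ℝ) else 0) -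
      r m p j * (if a = Fin.last m then (1 : ℝ) else 0)) = 0 := by
    simp [dotProduct, mul_sub, Finset.sum_sub_distrib, r, mul_div_cancel₀ _ hp]
  rw [Ep, vecMul_vecMulVec, this, zero_smul]

theorem liftJ_mulVec_one (m d : ℕ) (p : Fin (m + 1) → ℝ) (J : Fin d → Fin m)
    (μ : Matrix (Fin d) (Fin d) ℝ) : liftJ m d p J μ *ᵥ (fun _ => 1) = 0 := by
  simp [liftJ, sum_mulVec, smul_mulVec, Ep_mulVec_one]

theorem vecMul_liftJ {m : ℕ} {p : Fin (m + 1) → ℝ} (hp : p (Fin.last m) ≠ 0) (d : ℕ)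
    (J : Fin d → Fin m) (μ : Matrix (Fin d) (Fin d) ℝ) : p ᵥ* liftJ m d p J μ = 0 := by
  simp [liftJ, vecMul_sum, vecMul_smul, vecMul_Ep hp]

theorem AJ_eq_smul_liftJ (m d : ℕ) (p : Fin (m + 1) → ℝ) (J : Fin d → Fin m) (ω : ℝ) :
    AJ m d p J ω = ω • liftJ m d p J (of fun u v =>
      (if J u = J v then 1 else 0) - r m p (J v) / (1 + ∑ w, r m p (J w))) :=
  rfl

theorem AJ_mulVec_one (m d : ℕ) (p : Fin (m + 1) → ℝ) (J : Fin d → Fin m) (ω : ℝ) :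
    AJ m d p J ω *ᵥ (fun _ => 1) = 0 := by
  rw [AJ_eq_smul_liftJ, smul_mulVec, liftJ_mulVec_one, smul_zero]

theorem vecMul_AJ {m : ℕ} {p : Fin (m + 1) → ℝ} (hp : p (Fin.last m) ≠ 0) (d : ℕ)
    (J : Fin d → Fin m) (ω : ℝ) : p ᵥ* AJ m d p J ω = 0 := by
  rw [AJ_eq_smul_liftJ, vecMul_smul, vecMul_liftJ hp, smul_zero]

theorem sum_sum_ite_sub_div_mul {K ι : Type*} [Field K] [Fintype ι] [DecidableEq ι]
    (w X Y : ι → K) (c : K) :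
    ∑ u, ∑ v, ((if u = v then 1 else 0) - w v / c) * (X u * Y v) =
      ∑ u, X u * Y u - c⁻¹ * ((∑ u, X u) * ∑ v, w v * Y v) := by
  simp only [sub_mul, ite_mul, one_mul, zero_mul, Finset.sum_sub_distrib, Finset.sum_ite_eq,
    Finset.mem_univ, if_true]
  rw [Finset.sum_mul_sum, Finset.mul_sum]
  congr 1
  refine Finset.sum_congr rfl fun u _ => ?_
  rw [Finset.mul_sum]
  exact Finset.sum_congr rfl fun v _ => by ring

/- For injective `J`, `indJ` is the indicator of `𝒥 ∪ {n}` and `ratioJ` is `p / p_n` restricted to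
`𝒥 ∪ {n}`, i.e. `r_j` on `𝒥` and `1` at `n`. -/
noncomputable def indJ (m d : ℕ) (J : Fin d → Fin m) (a : Fin (m + 1)) : ℝ :=
  ∑ u, (if a = (J u).castSucc then 1 else 0) + if a = Fin.last m then 1 else 0

noncomputable def ratioJ (m d : ℕ) (p : Fin (m + 1) → ℝ) (J : Fin d → Fin m)
    (a : Fin (m + 1)) : ℝ :=
  ∑ u, r m p (J u) * (if a = (J u).castSucc then 1 else 0) + if a = Fin.last m then 1 else 0

theorem boole_eq_mul_boole_eq {R ι : Type*} [MulZeroOneClass R] [DecidableEq ι] (i a b : ι) :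
    (if a = i then (1 : R) else 0) * (if b = i then 1 else 0) =
      if a = b then (if a = i then 1 else 0) else 0 := by
  split_ifs <;> simp_all

theorem diagonal_indJ_apply (m d : ℕ) (J : Fin d → Fin m) (a b : Fin (m + 1)) :
    diagonal (indJ m d J) a b = ∑ u, (if a = (J u).castSucc then 1 else 0) *
      (if b = (J u).castSucc then 1 else 0) +
      (if a = Fin.last m then 1 else 0) * (if b = Fin.last m then 1 else 0) := by
  simp only [boole_eq_mul_boole_eq, Finset.sum_ite_irrel, Finset.sum_const_zero, diagonal_apply,
    indJ]
  split_ifs <;> simp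

theorem AJ_eq_diagonal_sub (m d : ℕ) (p : Fin (m + 1) → ℝ) {J : Fin d → Fin m}
    (hJ : J.Injective) (hc : 1 + ∑ w, r m p (J w) ≠ 0) (ω : ℝ) :
    AJ m d p J ω = ω • (diagonal (indJ m d J) -
      (1 + ∑ w, r m p (J w))⁻¹ • vecMulVec (indJ m d J) (ratioJ m d p J)) := by
  ext a b
  simp only [AJ, Ep, Matrix.smul_apply, Matrix.sub_apply, Matrix.sum_apply, vecMulVec_apply,
    hJ.eq_iff, smul_eq_mul]
  rw [sum_sum_ite_sub_div_mul (fun v => r m p (J v)), diagonal_indJ_apply]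
  simp only [indJ, ratioJ]
  set E : Fin d → Fin (m + 1) → ℝ := fun u x => if x = (J u).castSucc then 1 else 0
  set N : Fin (m + 1) → ℝ := fun x => if x = Fin.last m then 1 else 0
  set R : Fin d → ℝ := fun u => r m p (J u)
  have hXY : ∑ u, (E u a - R u * N a) * (E u b - N b) = ∑ u, E u a * E u b -
      (∑ u, E u a) * N b - N a * ∑ u, R u * E u b + (∑ u, R u) * (N a * N b) :=
    calc _ = ∑ u, (E u a * E u b - E u a * N b - N a * (R u * E u b) + R u * (N a * N b)) :=
          Finset.sum_congr rfl fun u _ => by ring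
      _ = _ := by
        simp only [Finset.sum_add_distrib, Finset.sum_sub_distrib, ← Finset.sum_mul,
          ← Finset.mul_sum]
  have hX : ∑ u, (E u a - R u * N a) = ∑ u, E u a - (∑ u, R u) * N a := by
    simp only [Finset.sum_sub_distrib, Finset.sum_mul]
  have hY : ∑ u, R u * (E u b - N b) = ∑ u, R u * E u b - (∑ u, R u) * N b := by
    simp only [mul_sub, Finset.sum_sub_distrib, Finset.sum_mul]
  rw [hXY, hX, hY]
  field_simp
  ring

theorem AJ_apply_nonpos_of_ne {m d : ℕ} {p : Fin (m + 1) → ℝ} (hp : ∀ a, 0 < p a)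
    {J : Fin d → Fin m} (hJ : J.Injective) {ω : ℝ} (hω : 0 ≤ ω) {a b : Fin (m + 1)}
    (hab : a ≠ b) : AJ m d p J ω a b ≤ 0 := by
  have hr : ∀ j, 0 ≤ r m p j := fun j => (div_pos (hp _) (hp _)).le
  have hc : 0 < 1 + ∑ w, r m p (J w) :=
    add_pos_of_pos_of_nonneg one_pos (Finset.sum_nonneg fun w _ => hr _)
  have hind : 0 ≤ indJ m d J a := by unfold indJ; positivity
  have hratio : 0 ≤ ratioJ m d p J b :=
    add_nonneg (Finset.sum_nonneg fun u _ => mul_nonneg (hr _) (by positivity)) (by positivity)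
  rw [AJ_eq_diagonal_sub m d p hJ hc.ne', Matrix.smul_apply, Matrix.sub_apply,
    diagonal_apply_ne _ hab, Matrix.smul_apply, vecMulVec_apply, zero_sub, smul_eq_mul,
    smul_eq_mul, mul_neg, neg_nonpos]
  exact mul_nonneg hω (mul_nonneg (inv_nonneg.mpr hc.le) (mul_nonneg hind hratio))

open NormedSpace in
theorem stmt15_general (m d : ℕ) (p : Fin (m + 1) → ℝ)
    (hp : ∀ a, 0 < p a)
    (J : Fin d → Fin m) (hJ : Function.Injective J) (ω : ℝ) (hω : 0 < ω) (t : ℝ) (ht : 0 ≤ t) :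
    IsUnit (NormedSpace.exp (-(t • AJ m d p J ω))) ∧
    (∀ a b, 0 ≤ NormedSpace.exp (-(t • AJ m d p J ω)) a b) ∧
    (NormedSpace.exp (-(t • AJ m d p J ω))).mulVec (fun _ => (1 : ℝ)) = (fun _ => (1 : ℝ)) ∧
    Matrix.vecMul p (NormedSpace.exp (-(t • AJ m d p J ω))) = p := by
  refine ⟨isUnit_exp _, exp_apply_nonneg_of_offDiag_nonneg fun a b hab => ?_,
    exp_mulVec_of_mulVec_eq_zero ?_, vecMul_exp_of_vecMul_eq_zero ?_⟩
  · rw [Matrix.neg_apply, Matrix.smul_apply, smul_eq_mul, neg_nonneg]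
    exact mul_nonpos_of_nonneg_of_nonpos ht (AJ_apply_nonpos_of_ne hp hJ hω.le hab)
  · rw [neg_mulVec, smul_mulVec, AJ_mulVec_one, smul_zero, neg_zero]
  · rw [vecMul_neg, vecMul_smul, vecMul_AJ (hp _).ne', smul_zero, neg_zero]

open NormedSpace in
/-- for `ω > 0` and `t ≥ 0`, `exp(−t A^{(p;ω)}_{(𝒥)})` is invertible and
lies in `⟨p⟩⁺`: entrywise nonnegative, rows summing to `1`, and leaving `p` invariant. -/
theorem stmt15 (m d : ℕ) (hm : 1 ≤ m) (hd : 1 ≤ d) (p : Fin (m + 1) → ℝ)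
    (hp : ∀ a, 0 < p a) (hsum : ∑ a, p a = 1)
    (J : Fin d → Fin m) (hJ : Function.Injective J) (ω : ℝ) (hω : 0 < ω) (t : ℝ) (ht : 0 ≤ t) :
    IsUnit (NormedSpace.exp (-(t • AJ m d p J ω))) ∧
    (∀ a b, 0 ≤ NormedSpace.exp (-(t • AJ m d p J ω)) a b) ∧
    (NormedSpace.exp (-(t • AJ m d p J ω))).mulVec (fun _ => (1 : ℝ)) = (fun _ => (1 : ℝ)) ∧
    Matrix.vecMul p (NormedSpace.exp (-(t • AJ m d p J ω))) = p :=
  stmt15_general m d p hp J hJ ω hω t ht
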